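/- arXiv:1703.06518 — 5 statements merged into one kernel-verified Lean document; each statement's English description precedes it below -/
import Mathlib

section
/- Let P₁ be the uniform distribution on the closed interval [a, b] with a < b, and let n ∈ ℕ, n ≥ 1. Then the set {a + (2i−1)(b−a)/(2n) : 1 ≤ i ≤ n} is an optimal set of n-means for P₁, and the nth quantization error is V_n(P₁) = (b−a)²/(12n²). -/
open MeasureTheory Set Filter Real
open scoped ENNReal

/-- Distortion error of a finite set of quantizers `γ` for the measure `P`. -/
noncomputable def distortion (P : Measure ℝ) (γ : Finset ℝ) : ℝ :=
  ∫ x, (⨅ c : γ, (x - (c : ℝ)) ^ 2) ∂P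

/-- The `n`-th quantization error of `P`. -/
noncomputable def quantErr (P : Measure ℝ) (n : ℕ) : ℝ :=
  sInf {v : ℝ | ∃ γ : Finset ℝ, γ.Nonempty ∧ γ.card ≤ n ∧ v = distortion P γ}

/-- `γ` is an optimal set of `n`-means for `P`. -/
def IsOptimalSet (P : Measure ℝ) (n : ℕ) (γ : Finset ℝ) : Prop :=
  γ.Nonempty ∧ γ.card ≤ n ∧ distortion P γ = quantErr P n

/-- Uniform distribution on `[a, b]`. -/
noncomputable def unif (a b : ℝ) : Measure ℝ :=
  (ENNReal.ofReal (b - a))⁻¹ • (volume.restrict (Icc a b))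

/-- The uniform discrete measure on `{2/3, 5/6, 1}`. -/
noncomputable def discD : Measure ℝ :=
  (3 : ℝ≥0∞)⁻¹ • (Measure.dirac (2/3) + Measure.dirac (5/6) + Measure.dirac 1)

/-- Mixture `(1/2)P₁ + (1/2)P₂`. -/
noncomputable def mix (P₁ P₂ : Measure ℝ) : Measure ℝ :=
  (2 : ℝ≥0∞)⁻¹ • P₁ + (2 : ℝ≥0∞)⁻¹ • P₂

/-!
Write the integrand as `infDist x γ ^ 2`. For any `γ` with at most `n` points, the sublevel set
`{x | infDist x γ ^ 2 ≤ t}` is covered by `n` intervals of length `2√t`, so by the layer-cake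
formula `∫_{[a,b]} infDist x γ ^ 2 ≥ ∫₀^{T²} (b - a - 2n√t) dt = (b - a)³ / (12n²)`, where
`T = (b - a) / (2n)`. The midpoints of the `n` equal subintervals of `[a, b]` attain this bound,
each subinterval of length `h` contributing `∫_{-h/2}^{h/2} x² dx = h³ / 12`.
-/

open Metric

theorem infDist_sq_le_sub_sq {s : Set ℝ} {c : ℝ} (hc : c ∈ s) (x : ℝ) :
    infDist x s ^ 2 ≤ (x - c) ^ 2 := by
  rw [← sq_abs (x - c), ← Real.dist_eq]
  exact pow_le_pow_left₀ infDist_nonneg (infDist_le_dist_of_mem hc) 2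

theorem iInf_sub_sq_eq_infDist_sq (γ : Finset ℝ) (x : ℝ) :
    ⨅ c : γ, (x - (c : ℝ)) ^ 2 = infDist x (γ : Set ℝ) ^ 2 := by
  rcases γ.eq_empty_or_nonempty with rfl | hγ
  · simp
  have : Nonempty γ := hγ.coe_sort
  obtain ⟨c, hc, hdist⟩ := γ.finite_toSet.isCompact.exists_infDist_eq_dist hγ x
  refine le_antisymm ?_ (le_ciInf fun c' => ?_)
  · calc ⨅ c : γ, (x - (c : ℝ)) ^ 2 ≤ (x - c) ^ 2 :=
          ciInf_le (Finite.bddBelow_range _) (⟨c, hc⟩ : γ)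
      _ = infDist x γ ^ 2 := by rw [hdist, Real.dist_eq, sq_abs]
  · exact infDist_sq_le_sub_sq c'.2 x

theorem volume_setOf_infDist_le_le (γ : Finset ℝ) (hγ : γ.Nonempty) (r : ℝ) :
    volume {x | infDist x (γ : Set ℝ) ≤ r} ≤ ENNReal.ofReal (2 * γ.card * r) := by
  have hsub : {x | infDist x (γ : Set ℝ) ≤ r} ⊆ ⋃ c ∈ γ, closedBall c r := by
    intro x hx
    obtain ⟨c, hc, hdist⟩ := γ.finite_toSet.isCompact.exists_infDist_eq_dist hγ x
    exact mem_biUnion hc (by rw [mem_closedBall, ← hdist]; exact hx)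
  calc volume {x | infDist x (γ : Set ℝ) ≤ r} ≤ ∑ c ∈ γ, volume (closedBall c r) :=
        (measure_mono hsub).trans (measure_biUnion_finset_le _ _)
    _ = γ.card * ENNReal.ofReal (2 * r) := by simp [Real.volume_closedBall]
    _ = ENNReal.ofReal (2 * γ.card * r) := by
        rw [← ENNReal.ofReal_natCast, ← ENNReal.ofReal_mul (by positivity)]; ring_nf

theorem integral_sub_mul_sqrt (m C : ℝ) {T : ℝ} (hT : 0 ≤ T) :
    ∫ t in (0 : ℝ)..T ^ 2, (m - C * √t) = m * T ^ 2 - 2 / 3 * C * T ^ 3 := by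
  have hsqrt : ∫ t in (0 : ℝ)..T ^ 2, √t = 2 / 3 * T ^ 3 := by
    simp_rw [Real.sqrt_eq_rpow]
    rw [integral_rpow (Or.inl (by norm_num)), ← Real.rpow_natCast T 2, ← Real.rpow_mul hT,
      Real.zero_rpow (by norm_num)]
    norm_num
    ring
  rw [intervalIntegral.integral_sub intervalIntegrable_const
      (Real.continuous_sqrt.intervalIntegrable _ _ |>.const_mul C),
    intervalIntegral.integral_const, intervalIntegral.integral_const_mul, hsqrt]
  simp only [sub_zero, smul_eq_mul]
  ring

theorem le_integral_of_measure_le_mul_sqrt {α : Type*} [MeasurableSpace α] {μ : Measure α}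
    [IsFiniteMeasure μ] {f : α → ℝ} (hfi : Integrable f μ) (hf0 : 0 ≤ f) {C : ℝ} (hC : 0 < C)
    (hμ : ∀ t, 0 < t → μ {x | f x ≤ t} ≤ ENNReal.ofReal (C * √t)) :
    μ.real univ ^ 3 / (3 * C ^ 2) ≤ ∫ x, f x ∂μ := by
  set m := μ.real univ
  set T := m / C
  have hT : 0 ≤ T := div_nonneg measureReal_nonneg hC.le
  have hsuper : ∀ t, 0 < t → ENNReal.ofReal (m - C * √t) ≤ μ {x | t < f x} := by
    intro t ht
    have hsplit := measure_univ_le_add_compl (μ := μ) {x | f x ≤ t}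
    simp only [compl_ofPred, not_le] at hsplit
    rw [ENNReal.ofReal_sub _ (by positivity), tsub_le_iff_left, ofReal_measureReal]
    exact hsplit.trans (by gcongr; exact hμ t ht)
  have hnonneg : ∀ t ∈ Ioc 0 (T ^ 2), 0 ≤ m - C * √t := by
    intro t ht
    have hsqrt : √t ≤ T := (Real.sqrt_le_sqrt ht.2).trans_eq (Real.sqrt_sq hT)
    have : C * T = m := mul_div_cancel₀ m hC.ne'
    nlinarith
  have hlow : ENNReal.ofReal (m ^ 3 / (3 * C ^ 2)) ≤ ∫⁻ x, ENNReal.ofReal (f x) ∂μ := by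
    rw [lintegral_eq_lintegral_meas_lt μ (Eventually.of_forall hf0) hfi.aemeasurable]
    calc ENNReal.ofReal (m ^ 3 / (3 * C ^ 2))
        = ENNReal.ofReal (∫ t in Ioc 0 (T ^ 2), (m - C * √t)) := by
          rw [← intervalIntegral.integral_of_le (by positivity), integral_sub_mul_sqrt m C hT]
          congr 1
          simp only [T]
          field_simp
          ring
      _ = ∫⁻ t in Ioc 0 (T ^ 2), ENNReal.ofReal (m - C * √t) :=
          ofReal_integral_eq_lintegral_ofReal
            ((continuous_const.sub (continuous_const.mul Real.continuous_sqrt)).integrableOn_Icc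
              |>.mono_set Ioc_subset_Icc_self)
            ((ae_restrict_iff' measurableSet_Ioc).2 (Eventually.of_forall hnonneg))
      _ ≤ ∫⁻ t in Ioc 0 (T ^ 2), μ {x | t < f x} :=
          setLIntegral_mono
            (Antitone.measurable fun _ _ h ↦ measure_mono fun _ hx ↦ h.trans_lt hx)
            fun t ht ↦ hsuper t ht.1
      _ ≤ ∫⁻ t in Ioi 0, μ {x | t < f x} := lintegral_mono_set Ioc_subset_Ioi_self
  rwa [← ofReal_integral_eq_lintegral_ofReal hfi (Eventually.of_forall hf0),
    ENNReal.ofReal_le_ofReal_iff (integral_nonneg hf0)] at hlow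

theorem integral_sub_midpoint_sq (u v : ℝ) :
    ∫ x in u..v, (x - (u + v) / 2) ^ 2 = (v - u) ^ 3 / 12 := by
  rw [intervalIntegral.integral_comp_sub_right (· ^ 2), integral_pow]
  ring

theorem setIntegral_Icc_infDist_sq_le {a b : ℝ} (hab : a ≤ b) {n : ℕ} (hn : 0 < n) :
    ∫ x in Icc a b, infDist x
        (Finset.image (fun i : ℕ => a + (2 * (i : ℝ) + 1) * (b - a) / (2 * n)) (Finset.range n) :
          Set ℝ) ^ 2 ≤ (b - a) ^ 3 / (12 * n ^ 2) := by
  set γ := Finset.image (fun i : ℕ => a + (2 * (i : ℝ) + 1) * (b - a) / (2 * n)) (Finset.range n)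
  have hn0 : (n : ℝ) ≠ 0 := by positivity
  have hstep : 0 ≤ (b - a) / n := div_nonneg (sub_nonneg.2 hab) n.cast_nonneg
  set φ : ℕ → ℝ := fun i => a + i * ((b - a) / n)
  have hcont : Continuous fun x => infDist x (γ : Set ℝ) ^ 2 := (continuous_infDist_pt _).pow 2
  have hpiece : ∀ i ∈ Finset.range n,
      ∫ x in φ i..φ (i + 1), infDist x (γ : Set ℝ) ^ 2 ≤ ((b - a) / n) ^ 3 / 12 := by
    intro i hi
    have hmid : (φ i + φ (i + 1)) / 2 ∈ (γ : Set ℝ) :=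
      Finset.mem_coe.2 (Finset.mem_image.2 ⟨i, hi, by simp only [φ]; push_cast; field_simp; ring⟩)
    calc ∫ x in φ i..φ (i + 1), infDist x (γ : Set ℝ) ^ 2
        ≤ ∫ x in φ i..φ (i + 1), (x - (φ i + φ (i + 1)) / 2) ^ 2 :=
          intervalIntegral.integral_mono_on
            (by simp only [φ]; push_cast; nlinarith [hstep])
            (hcont.intervalIntegrable _ _)
            ((continuous_id.sub continuous_const).pow 2 |>.intervalIntegrable _ _)
            fun x _ => infDist_sq_le_sub_sq hmid x
      _ = ((b - a) / n) ^ 3 / 12 := by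
          rw [integral_sub_midpoint_sq]
          simp only [φ]
          push_cast
          ring
  calc ∫ x in Icc a b, infDist x (γ : Set ℝ) ^ 2
      = ∑ i ∈ Finset.range n, ∫ x in φ i..φ (i + 1), infDist x (γ : Set ℝ) ^ 2 := by
        rw [intervalIntegral.sum_integral_adjacent_intervals
            fun _ _ => hcont.intervalIntegrable _ _, integral_Icc_eq_integral_Ioc,
          ← intervalIntegral.integral_of_le hab]
        simp only [φ]
        congr 1 <;> field_simp <;> ring
    _ ≤ ∑ _i ∈ Finset.range n, ((b - a) / n) ^ 3 / 12 := Finset.sum_le_sum hpiece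
    _ = (b - a) ^ 3 / (12 * n ^ 2) := by
        rw [Finset.sum_const, Finset.card_range, nsmul_eq_mul]
        field_simp

theorem le_setIntegral_Icc_infDist_sq {a b : ℝ} (hab : a ≤ b) {γ : Finset ℝ} (hγ : γ.Nonempty)
    {n : ℕ} (hcard : γ.card ≤ n) :
    (b - a) ^ 3 / (12 * n ^ 2) ≤ ∫ x in Icc a b, infDist x (γ : Set ℝ) ^ 2 := by
  have hn : (0 : ℝ) < n := by exact_mod_cast hγ.card_pos.trans_le hcard
  have hsublevel : ∀ t, 0 < t → volume.restrict (Icc a b) {x | infDist x (γ : Set ℝ) ^ 2 ≤ t} ≤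
      ENNReal.ofReal (2 * n * √t) := by
    intro t _
    calc volume.restrict (Icc a b) {x | infDist x (γ : Set ℝ) ^ 2 ≤ t}
        ≤ volume {x | infDist x (γ : Set ℝ) ≤ √t} :=
          (Measure.restrict_apply_le _ _).trans
            (measure_mono fun x hx => Real.le_sqrt_of_sq_le hx)
      _ ≤ ENNReal.ofReal (2 * n * √t) :=
          (volume_setOf_infDist_le_le γ hγ √t).trans (by gcongr)
  have := le_integral_of_measure_le_mul_sqrt
    ((continuous_infDist_pt _).pow 2).integrableOn_Icc (fun x => sq_nonneg _) (by positivity)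
    hsublevel
  rwa [measureReal_restrict_apply_univ, Real.volume_real_Icc, max_eq_left (sub_nonneg.2 hab),
    show 3 * (2 * (n : ℝ)) ^ 2 = 12 * n ^ 2 by ring] at this

theorem distortion_unif {a b : ℝ} (hab : a ≤ b) (γ : Finset ℝ) :
    distortion (unif a b) γ = (b - a)⁻¹ * ∫ x in Icc a b, infDist x (γ : Set ℝ) ^ 2 := by
  simp_rw [distortion, unif, iInf_sub_sq_eq_infDist_sq, integral_smul_measure, ENNReal.toReal_inv,
    ENNReal.toReal_ofReal (sub_nonneg.2 hab), smul_eq_mul]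

theorem isOptimalSet_and_quantErr_eq {P : Measure ℝ} {n : ℕ} {γ : Finset ℝ} {v : ℝ}
    (hγ : γ.Nonempty) (hcard : γ.card ≤ n) (hv : distortion P γ = v)
    (hle : ∀ γ' : Finset ℝ, γ'.Nonempty → γ'.card ≤ n → v ≤ distortion P γ') :
    IsOptimalSet P n γ ∧ quantErr P n = v := by
  have hq : quantErr P n = v :=
    IsLeast.csInf_eq ⟨⟨γ, hγ, hcard, hv.symm⟩, by rintro _ ⟨γ', h₁, h₂, rfl⟩; exact hle γ' h₁ h₂⟩
  exact ⟨⟨hγ, hcard, hv.trans hq.symm⟩, hq⟩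

theorem stmt1 (a b : ℝ) (hab : a < b) (n : ℕ) (hn : 1 ≤ n) :
    IsOptimalSet (unif a b) n
      (Finset.image (fun i : ℕ => a + (2 * (i : ℝ) + 1) * (b - a) / (2 * n))
        (Finset.range n)) ∧
    quantErr (unif a b) n = (b - a) ^ 2 / (12 * n ^ 2) := by
  set γ := Finset.image (fun i : ℕ => a + (2 * (i : ℝ) + 1) * (b - a) / (2 * n)) (Finset.range n)
  have hγ : γ.Nonempty := (Finset.nonempty_range_iff.2 (by omega)).image _
  have hcard : γ.card ≤ n := Finset.card_image_le.trans (Finset.card_range n).le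
  have hscale : (b - a)⁻¹ * ((b - a) ^ 3 / (12 * n ^ 2)) = (b - a) ^ 2 / (12 * n ^ 2) := by
    field_simp [(sub_pos.2 hab).ne']
  have hinv : 0 ≤ (b - a)⁻¹ := inv_nonneg.2 (sub_nonneg.2 hab.le)
  have hlower : ∀ γ' : Finset ℝ, γ'.Nonempty → γ'.card ≤ n →
      (b - a) ^ 2 / (12 * n ^ 2) ≤ distortion (unif a b) γ' := fun γ' hγ' hcard' => by
    rw [distortion_unif hab.le, ← hscale]
    exact mul_le_mul_of_nonneg_left (le_setIntegral_Icc_infDist_sq hab.le hγ' hcard') hinv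
  have hupper : distortion (unif a b) γ ≤ (b - a) ^ 2 / (12 * n ^ 2) := by
    rw [distortion_unif hab.le, ← hscale]
    exact mul_le_mul_of_nonneg_left (setIntegral_Icc_infDist_sq_le hab.le hn) hinv
  exact isOptimalSet_and_quantErr_eq hγ hcard (le_antisymm hupper (hlower γ hγ hcard)) hlower
end

section
/- Let P = (1/2)P₁ + (1/2)P₂ where P₁ is uniform on [0, 1/2] and P₂ is the uniform discrete measure on {2/3, 5/6, 1}. Then the set {1/4, 5/6} is an optimal set of two-means for P, and the quantization error is V₂(P) = 17/864. -/
open MeasureTheory Set Filter Real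
open scoped ENNReal

/-! ### Auxiliary lemmas -/

lemma myIntegrableDirac (f : ℝ → ℝ) (a : ℝ) : Integrable f (Measure.dirac a) := by
  refine (integrable_const (f a)).congr ?_
  rw [Filter.EventuallyEq, MeasureTheory.ae_dirac_eq]
  exact Filter.eventually_pure.2 rfl

lemma sq_iint (c l u : ℝ) : ∫ x in l..u, (x-c)^2 = ((u-c)^3 - (l-c)^3)/3 := by
  rw [intervalIntegral.integral_comp_sub_right (fun y => y^2) c, integral_pow]
  norm_num

lemma sq_int (c l u : ℝ) (h : l ≤ u) :
    ∫ x in Icc l u, (x - c)^2 = ((u-c)^3 - (l-c)^3)/3 := by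
  rw [integral_Icc_eq_integral_Ioc, ← intervalIntegral.integral_of_le h, sq_iint]

lemma minInf_pair (a b x : ℝ) :
    (⨅ c : ({a, b} : Finset ℝ), (x - (c:ℝ))^2) = min ((x-a)^2) ((x-b)^2) := by
  have hbdd : BddBelow (range fun c : ({a, b} : Finset ℝ) => (x - (c:ℝ))^2) := by
    refine ⟨0, ?_⟩; rintro _ ⟨c, rfl⟩; positivity
  have hne : Nonempty ({a, b} : Finset ℝ) := ⟨⟨a, by simp⟩⟩
  apply le_antisymm
  · rcases le_total ((x-a)^2) ((x-b)^2) with h | h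
    · rw [min_eq_left h]
      exact ciInf_le hbdd ⟨a, by simp⟩
    · rw [min_eq_right h]
      exact ciInf_le hbdd ⟨b, by simp⟩
  · apply le_ciInf
    rintro ⟨c, hc⟩
    simp only [Finset.mem_insert, Finset.mem_singleton] at hc
    rcases hc with rfl | rfl
    · exact min_le_left _ _
    · exact min_le_right _ _

lemma mix_eq : mix (unif 0 (1/2)) discD
    = volume.restrict (Icc 0 (1/2))
      + (6:ℝ≥0∞)⁻¹ • (Measure.dirac (2/3) + Measure.dirac (5/6) + Measure.dirac 1) := by
  unfold mix unif discD
  rw [smul_smul, smul_smul]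
  have h1 : ENNReal.ofReal (1/2 - 0 : ℝ) = 2⁻¹ := by
    rw [show (1/2 - 0 : ℝ) = 2⁻¹ by norm_num, ENNReal.ofReal_inv_of_pos two_pos,
      ENNReal.ofReal_ofNat]
  rw [h1]
  congr 1
  · rw [inv_inv, show ((2:ℝ≥0∞)⁻¹ * 2) = 1 by
      rw [ENNReal.inv_mul_cancel] <;> norm_num, one_smul]
  · congr 1
    rw [← ENNReal.mul_inv (by norm_num) (by norm_num)]
    norm_num

lemma integral_mix (f : ℝ → ℝ) (hf : Continuous f) :
    ∫ x, f x ∂(mix (unif 0 (1/2)) discD)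
      = (∫ x in Icc (0:ℝ) (1/2), f x) + (f (2/3) + f (5/6) + f 1)/6 := by
  rw [mix_eq, integral_add_measure (hf.integrableOn_Icc)
    (((((myIntegrableDirac f _).add_measure (myIntegrableDirac f _))).add_measure
      (myIntegrableDirac f _)).smul_measure (by norm_num)),
    integral_smul_measure, integral_add_measure
      ((myIntegrableDirac f _).add_measure (myIntegrableDirac f _)) (myIntegrableDirac f _),
    integral_add_measure (myIntegrableDirac f _) (myIntegrableDirac f _),
    integral_dirac, integral_dirac, integral_dirac]
  rw [show ((6:ℝ≥0∞)⁻¹).toReal = 1/6 by simp, smul_eq_mul]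
  ring

lemma distortion_pair (a b : ℝ) :
    distortion (mix (unif 0 (1/2)) discD) ({a, b} : Finset ℝ)
      = (∫ x in Icc (0:ℝ) (1/2), min ((x-a)^2) ((x-b)^2))
        + (min ((2/3-a)^2) ((2/3-b)^2) + min ((5/6-a)^2) ((5/6-b)^2)
            + min ((1-a)^2) ((1-b)^2))/6 := by
  have hc : Continuous (fun x : ℝ => min ((x-a)^2) ((x-b)^2)) := by fun_prop
  unfold distortion
  simp only [minInf_pair]
  exact integral_mix _ hc

lemma caseC (a b m : ℝ) (h0 : 0 ≤ m) (h1 : m ≤ 1/2) :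
    17/864 ≤ ((m-a)^3 - (0-a)^3)/3 + ((1/2-b)^3 - (m-b)^3)/3
      + ((2/3-b)^2+(5/6-b)^2+(1-b)^2)/6 := by
  have h2 : (0:ℝ) ≤ 1/2 - m := by linarith
  have h3 : (0:ℝ) < 1 - m := by linarith
  nlinarith [mul_nonneg (mul_nonneg h3.le h0) (sq_nonneg (a - m/2)),
    mul_nonneg h2 h2, mul_nonneg (mul_nonneg h2 h2) h2,
    sq_nonneg ((1-m)*b - (1/2-m)*(m+1/2)/2 - 5/12), h3]

set_option maxHeartbeats 2000000 in
lemma caseA (a b : ℝ) :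
    17/864 ≤ ((1/2-a)^3 - (0-a)^3)/3
      + (min ((2/3-a)^2) ((2/3-b)^2) + min ((5/6-a)^2) ((5/6-b)^2)
          + min ((1-a)^2) ((1-b)^2))/6 := by
  rcases min_cases ((2/3-a)^2) ((2/3-b)^2) with ⟨h1, _⟩ | ⟨h1, _⟩ <;>
    rcases min_cases ((5/6-a)^2) ((5/6-b)^2) with ⟨h2, _⟩ | ⟨h2, _⟩ <;>
    rcases min_cases ((1-a)^2) ((1-b)^2) with ⟨h3, _⟩ | ⟨h3, _⟩ <;>
    rw [h1, h2, h3]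
  · nlinarith [sq_nonneg (a - 13/24), sq_nonneg (b - 5/6)]
  · nlinarith [sq_nonneg (a - 9/20), sq_nonneg (b - 1)]
  · nlinarith [sq_nonneg (a - 29/60), sq_nonneg (b - 5/6)]
  · nlinarith [sq_nonneg (a - 17/48), sq_nonneg (b - 11/12)]
  · nlinarith [sq_nonneg (a - 31/60), sq_nonneg (b - 2/3)]
  · nlinarith [sq_nonneg (a - 19/48), sq_nonneg (b - 5/6)]
  · nlinarith [sq_nonneg (a - 7/16), sq_nonneg (b - 3/4)]
  · nlinarith [sq_nonneg (a - 1/4), sq_nonneg (b - 5/6)]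

lemma key_lb (a b : ℝ) (hab : a ≤ b) :
    17/864 ≤ (∫ x in Icc (0:ℝ) (1/2), min ((x-a)^2) ((x-b)^2))
      + (min ((2/3-a)^2) ((2/3-b)^2) + min ((5/6-a)^2) ((5/6-b)^2)
          + min ((1-a)^2) ((1-b)^2))/6 := by
  rcases le_or_gt 1 (a+b) with hm | hm
  · have hint : (∫ x in Icc (0:ℝ) (1/2), min ((x-a)^2) ((x-b)^2))
        = ∫ x in Icc (0:ℝ) (1/2), (x-a)^2 := by
      apply setIntegral_congr_fun measurableSet_Icc
      intro x hx
      exact min_eq_left (by nlinarith [hx.1, hx.2])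
    rw [hint, sq_int a 0 (1/2) (by norm_num)]
    exact caseA a b
  rcases le_or_gt (a+b) 0 with hm0 | hm0
  · have hint : (∫ x in Icc (0:ℝ) (1/2), min ((x-a)^2) ((x-b)^2))
        = ∫ x in Icc (0:ℝ) (1/2), (x-b)^2 := by
      apply setIntegral_congr_fun measurableSet_Icc
      intro x hx
      exact min_eq_right (by nlinarith [hx.1, hx.2])
    rw [hint, sq_int b 0 (1/2) (by norm_num),
      min_eq_right (by nlinarith), min_eq_right (by nlinarith), min_eq_right (by nlinarith)]
    have := caseC a b 0 le_rfl (by norm_num)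
    linarith
  · set m : ℝ := (a+b)/2 with hmdef
    have hm1 : 0 < m := by simp only [hmdef]; linarith
    have hm2 : m < 1/2 := by simp only [hmdef]; linarith
    have hcont : Continuous (fun x : ℝ => min ((x-a)^2) ((x-b)^2)) := by fun_prop
    have hsplit : (∫ x in Icc (0:ℝ) (1/2), min ((x-a)^2) ((x-b)^2))
        = (∫ x in (0:ℝ)..m, min ((x-a)^2) ((x-b)^2))
          + ∫ x in m..(1/2), min ((x-a)^2) ((x-b)^2) := by
      rw [integral_Icc_eq_integral_Ioc,
        ← intervalIntegral.integral_of_le (by norm_num : (0:ℝ) ≤ 1/2),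
        ← intervalIntegral.integral_add_adjacent_intervals
          (hcont.intervalIntegrable _ _) (hcont.intervalIntegrable _ _)]
    have hL : (∫ x in (0:ℝ)..m, min ((x-a)^2) ((x-b)^2)) = ((m-a)^3 - (0-a)^3)/3 := by
      rw [intervalIntegral.integral_congr (g := fun x => (x-a)^2) ?_, sq_iint]
      intro x hx
      rw [Set.uIcc_of_le hm1.le] at hx
      exact min_eq_left (by nlinarith [hx.1, hx.2])
    have hR : (∫ x in m..(1/2), min ((x-a)^2) ((x-b)^2)) = ((1/2-b)^3 - (m-b)^3)/3 := by
      rw [intervalIntegral.integral_congr (g := fun x => (x-b)^2) ?_, sq_iint]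
      intro x hx
      rw [Set.uIcc_of_le hm2.le] at hx
      exact min_eq_right (by nlinarith [hx.1, hx.2])
    rw [hsplit, hL, hR,
      min_eq_right (by nlinarith), min_eq_right (by nlinarith), min_eq_right (by nlinarith)]
    have := caseC a b m hm1.le hm2.le
    linarith

lemma exists_pair (γ : Finset ℝ) (hne : γ.Nonempty) (hcard : γ.card ≤ 2) :
    ∃ a b : ℝ, a ≤ b ∧ γ = {a, b} := by
  rcases Nat.lt_or_ge γ.card 2 with h | h
  · have h0 : 0 < γ.card := Finset.card_pos.mpr hne
    have h1 : γ.card = 1 := by omega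
    obtain ⟨a, rfl⟩ := Finset.card_eq_one.mp h1
    exact ⟨a, a, le_rfl, by simp⟩
  · have h2 : γ.card = 2 := le_antisymm hcard h
    obtain ⟨a, b, hne', rfl⟩ := Finset.card_eq_two.mp h2
    rcases le_total a b with hab | hab
    · exact ⟨a, b, hab, rfl⟩
    · exact ⟨b, a, hab, by rw [Finset.pair_comm]⟩

lemma dist_lb (γ : Finset ℝ) (hne : γ.Nonempty) (hcard : γ.card ≤ 2) :
    17/864 ≤ distortion (mix (unif 0 (1/2)) discD) γ := by
  obtain ⟨a, b, hab, rfl⟩ := exists_pair γ hne hcard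
  rw [distortion_pair]
  exact key_lb a b hab

lemma dist_val : distortion (mix (unif 0 (1/2)) discD) ({1/4, 5/6} : Finset ℝ) = 17/864 := by
  rw [distortion_pair]
  have hint : (∫ x in Icc (0:ℝ) (1/2), min ((x-(1/4:ℝ))^2) ((x-(5/6:ℝ))^2))
      = ∫ x in Icc (0:ℝ) (1/2), (x-(1/4:ℝ))^2 := by
    apply setIntegral_congr_fun measurableSet_Icc
    intro x hx
    exact min_eq_left (by nlinarith [hx.1, hx.2])
  rw [hint, sq_int _ _ _ (by norm_num),
    min_eq_right (by norm_num), min_eq_right (by norm_num), min_eq_right (by norm_num)]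
  norm_num

theorem stmt3 (P : Measure ℝ) (hP : P = mix (unif 0 (1/2)) discD) :
    IsOptimalSet P 2 ({1/4, 5/6} : Finset ℝ) ∧ quantErr P 2 = 17/864 := by
  subst hP
  have hcard : ({1/4, 5/6} : Finset ℝ).card ≤ 2 := Finset.card_insert_le _ _ |>.trans (by simp)
  have hne : ({1/4, 5/6} : Finset ℝ).Nonempty := ⟨1/4, by simp⟩
  have hmem : (17/864 : ℝ) ∈ {v : ℝ | ∃ γ : Finset ℝ, γ.Nonempty ∧ γ.card ≤ 2
      ∧ v = distortion (mix (unif 0 (1/2)) discD) γ} :=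
    ⟨{1/4, 5/6}, hne, hcard, dist_val.symm⟩
  have hlb : ∀ v ∈ {v : ℝ | ∃ γ : Finset ℝ, γ.Nonempty ∧ γ.card ≤ 2
      ∧ v = distortion (mix (unif 0 (1/2)) discD) γ}, 17/864 ≤ v := by
    rintro v ⟨γ, h1, h2, rfl⟩
    exact dist_lb γ h1 h2
  have hq : quantErr (mix (unif 0 (1/2)) discD) 2 = 17/864 := by
    unfold quantErr
    exact le_antisymm (csInf_le ⟨17/864, hlb⟩ hmem) (le_csInf ⟨_, hmem⟩ hlb)
  exact ⟨⟨hne, hcard, dist_val.trans hq.symm⟩, hq⟩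
end

section
/- Let P = (1/2)P₁ + (1/2)P₂ where P₁ is uniform on [0, 1/2] and P₂ is the uniform discrete measure on {2/3, 5/6, 1}. Then the set {1/8, 3/8, 2/3, 5/6, 1} is an optimal set of five-means for P, and the corresponding quantization error is V₅(P) = 1/384. -/
open MeasureTheory Set Filter Real
open scoped ENNReal

/-!
Centers `c₁ < ⋯ < cₖ` cost at least `ℓ³/(12k²)` on an interval of length `ℓ`: cut the interval
at the midpoint between the two largest centers, induct on the left part and combine the two
cells by Radon's inequality. Keeping the largest center `c ≥ b` fixed, the same cut bounds the
cost of at most three centers on `[0, b]` by `c³/75 - (c - b)³/3`. Two centers leave squared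
error at least `1/72` on the atoms `2/3, 5/6, 1`.

For five centers, if at most two lie below `5/8`, then `[0, 1/2]` alone costs at least `1/384`
(the bound above with `c = 5/8`, attained by `1/8, 3/8`). If at most one lies at or above `5/8`,
the atoms cost at least `1/432` and `[0, 1/2]` at least `1/2400`. Otherwise exactly three lie
below `5/8`; with `r` the largest of them, the atoms cost at least `min ((2/3 - r)², 1/72) / 6`,
which is `1/432` again if `r ≤ 1/2`, while for `r ≥ 1/2` the three-center bound with `c = r`
makes up the difference.
-/

noncomputable def minSqDist (γ : Finset ℝ) (x : ℝ) : ℝ := ⨅ c : γ, (x - (c : ℝ)) ^ 2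

section minSqDist

variable {γ σ : Finset ℝ} {a b c x : ℝ}

theorem minSqDist_eq_inf' (hγ : γ.Nonempty) (x : ℝ) :
    minSqDist γ x = γ.inf' hγ (fun c => (x - c) ^ 2) := by
  rw [minSqDist, Finset.inf'_eq_csInf_image, iInf]
  congr 1
  ext v
  simp

theorem minSqDist_le_sq (hc : c ∈ γ) (x : ℝ) : minSqDist γ x ≤ (x - c) ^ 2 := by
  rw [minSqDist_eq_inf' ⟨c, hc⟩]
  exact Finset.inf'_le _ hc

theorem le_minSqDist (hγ : γ.Nonempty) {v : ℝ} (hv : ∀ c ∈ γ, v ≤ (x - c) ^ 2) :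
    v ≤ minSqDist γ x := by
  rw [minSqDist_eq_inf' hγ]
  exact Finset.le_inf' hγ _ hv

theorem minSqDist_nonneg (hγ : γ.Nonempty) (x : ℝ) : 0 ≤ minSqDist γ x :=
  le_minSqDist hγ fun _ _ => sq_nonneg _

theorem minSqDist_eq_sq_of_forall (hc : c ∈ γ) (h : ∀ y ∈ γ, (x - c) ^ 2 ≤ (x - y) ^ 2) :
    minSqDist γ x = (x - c) ^ 2 :=
  le_antisymm (minSqDist_le_sq hc x) (le_minSqDist ⟨c, hc⟩ h)

@[simp]
theorem minSqDist_singleton (c x : ℝ) : minSqDist {c} x = (x - c) ^ 2 := by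
  simp [minSqDist_eq_inf' (Finset.singleton_nonempty c)]

theorem continuous_minSqDist (hγ : γ.Nonempty) : Continuous (minSqDist γ) := by
  simp_rw [funext (minSqDist_eq_inf' hγ)]
  exact Continuous.finset_inf'_apply hγ fun _ _ => by fun_prop

theorem intervalIntegrable_minSqDist (hγ : γ.Nonempty) (a b : ℝ) :
    IntervalIntegrable (minSqDist γ) volume a b :=
  (continuous_minSqDist hγ).intervalIntegrable a b

theorem integral_minSqDist_mono (hσ : σ.Nonempty) (hγ : γ.Nonempty) (hab : a ≤ b)
    (h : ∀ y ∈ γ, ∃ z ∈ σ, ∀ x ∈ Icc a b, (x - z) ^ 2 ≤ (x - y) ^ 2) :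
    ∫ x in a..b, minSqDist σ x ≤ ∫ x in a..b, minSqDist γ x := by
  refine intervalIntegral.integral_mono_on hab (intervalIntegrable_minSqDist hσ a b)
    (intervalIntegrable_minSqDist hγ a b) fun x hx => le_minSqDist hγ fun y hy => ?_
  obtain ⟨z, hz, hzy⟩ := h y hy
  exact (minSqDist_le_sq hz x).trans (hzy x hx)

theorem integral_minSqDist_insert_le (hγ : γ.Nonempty) (c : ℝ) (hab : a ≤ b) :
    ∫ x in a..b, minSqDist (insert c γ) x ≤ ∫ x in a..b, minSqDist γ x :=
  integral_minSqDist_mono (Finset.insert_nonempty c γ) hγ hab fun y hy =>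
    ⟨y, Finset.mem_insert_of_mem hy, fun _ _ => le_rfl⟩

end minSqDist

theorem sq_sub_le_sq_sub_of_two_mul_le {x y z : ℝ} (hyz : y ≤ z) (hx : 2 * x ≤ y + z) :
    (x - y) ^ 2 ≤ (x - z) ^ 2 := by
  nlinarith

theorem sq_sub_le_sq_sub_of_le_two_mul {x y z : ℝ} (hyz : y ≤ z) (hx : y + z ≤ 2 * x) :
    (x - z) ^ 2 ≤ (x - y) ^ 2 := by
  nlinarith

theorem min_le_minSqDist_of_forall_le_or_eq {γ : Finset ℝ} (hγ : γ.Nonempty) {p q q' x : ℝ}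
    (hpx : p ≤ x) (h : ∀ y ∈ γ, y ≤ p ∨ y = q ∨ y = q') :
    min ((x - p) ^ 2) (min ((x - q) ^ 2) ((x - q') ^ 2)) ≤ minSqDist γ x := by
  refine le_minSqDist hγ fun y hy => ?_
  rcases h y hy with hyp | rfl | rfl
  · exact (min_le_left _ _).trans (sq_sub_le_sq_sub_of_le_two_mul hyp (by linarith))
  · exact (min_le_right _ _).trans (min_le_left _ _)
  · exact (min_le_right _ _).trans (min_le_right _ _)

theorem integral_sub_sq (a b c : ℝ) :
    ∫ x in a..b, (x - c) ^ 2 = ((b - c) ^ 3 - (a - c) ^ 3) / 3 := by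
  rw [intervalIntegral.integral_comp_sub_right (fun x => x ^ 2) c, integral_pow]
  ring

theorem div_twelve_le_integral_sub_sq {a b : ℝ} (hab : a ≤ b) (c : ℝ) :
    (b - a) ^ 3 / 12 ≤ ∫ x in a..b, (x - c) ^ 2 := by
  rw [integral_sub_sq]
  nlinarith [mul_nonneg (sub_nonneg.2 hab) (sq_nonneg (a + b - 2 * c))]

theorem exists_split_integral_minSqDist_insert {s : Finset ℝ} {a b c : ℝ} (hs : s.Nonempty)
    (hc : ∀ y ∈ s, y < c) (hab : a ≤ b) :
    ∃ t ∈ Icc a b, (∫ x in a..t, minSqDist s x) + ∫ x in t..b, (x - c) ^ 2 ≤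
      ∫ x in a..b, minSqDist (insert c s) x := by
  set m := s.max' hs
  have hmc : m < c := hc m (s.max'_mem hs)
  set t := max a (min b ((m + c) / 2))
  have hat : a ≤ t := le_max_left _ _
  have htb : t ≤ b := max_le hab (min_le_left _ _)
  have hins : (insert c s).Nonempty := Finset.insert_nonempty c s
  refine ⟨t, ⟨hat, htb⟩, ?_⟩
  have hleft : ∫ x in a..t, minSqDist s x ≤ ∫ x in a..t, minSqDist (insert c s) x := by
    refine intervalIntegral.integral_mono_on_of_le_Ioo hat (intervalIntegrable_minSqDist hs a t)
      (intervalIntegrable_minSqDist hins a t) fun x hx => le_minSqDist hins fun y hy => ?_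
    rcases Finset.mem_insert.1 hy with rfl | hy
    · have hx : x < (m + y) / 2 :=
        (lt_min_iff.1 ((lt_max_iff.1 hx.2).resolve_left hx.1.not_gt)).2
      exact (minSqDist_le_sq (s.max'_mem hs) x).trans
        (sq_sub_le_sq_sub_of_two_mul_le hmc.le (by linarith))
    · exact minSqDist_le_sq hy x
  have hright : ∫ x in t..b, (x - c) ^ 2 ≤ ∫ x in t..b, minSqDist (insert c s) x := by
    refine intervalIntegral.integral_mono_on_of_le_Ioo htb
      ((by fun_prop : Continuous fun x : ℝ => (x - c) ^ 2).intervalIntegrable t b)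
      (intervalIntegrable_minSqDist hins t b) fun x hx => le_minSqDist hins fun y hy => ?_
    rcases Finset.mem_insert.1 hy with rfl | hy
    · exact le_rfl
    · have hx : (m + c) / 2 < x :=
        (min_lt_iff.1 (max_lt_iff.1 hx.1).2).resolve_left hx.2.le.not_gt
      exact sq_sub_le_sq_sub_of_le_two_mul (hc y hy).le (by linarith [s.le_max' y hy])
  rw [← intervalIntegral.integral_add_adjacent_intervals (intervalIntegrable_minSqDist hins a t)
    (intervalIntegrable_minSqDist hins t b)]
  exact add_le_add hleft hright

theorem add_pow_three_div_sq_le {u v N : ℝ} (hu : 0 ≤ u) (hv : 0 ≤ v) (hN : 0 < N) :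
    (u + v) ^ 3 / (12 * (N + 1) ^ 2) ≤ u ^ 3 / (12 * N ^ 2) + v ^ 3 / 12 := by
  have key : (u + v) ^ 3 * N ^ 2 ≤ u ^ 3 * (N + 1) ^ 2 + v ^ 3 * N ^ 2 * (N + 1) ^ 2 := by
    nlinarith [mul_nonneg (sq_nonneg (u - N * v))
      (by positivity : (0:ℝ) ≤ (2 * N + 1) * u + (N ^ 2 + 2 * N) * v)]
  rw [div_add_div _ _ (by positivity) (by norm_num),
    div_le_div_iff₀ (by positivity) (by positivity)]
  nlinarith [key]

theorem div_le_integral_minSqDist {γ : Finset ℝ} (hγ : γ.Nonempty) {n : ℕ} (hn : γ.card ≤ n)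
    {a b : ℝ} (hab : a ≤ b) : (b - a) ^ 3 / (12 * n ^ 2) ≤ ∫ x in a..b, minSqDist γ x := by
  induction γ using Finset.induction_on_max generalizing n b with
  | empty => exact absurd hγ Finset.not_nonempty_empty
  | insert c s hc ih =>
    have hcard : s.card + 1 ≤ n := by
      rwa [Finset.card_insert_of_notMem fun h => (hc c h).false] at hn
    rcases s.eq_empty_or_nonempty with rfl | hs
    · have hn1 : (1 : ℝ) ≤ n := by exact_mod_cast hcard
      calc (b - a) ^ 3 / (12 * n ^ 2) ≤ (b - a) ^ 3 / 12 :=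
            div_le_div_of_nonneg_left (pow_nonneg (sub_nonneg.2 hab) 3) (by norm_num)
              (by nlinarith)
        _ ≤ _ := by simpa using div_twelve_le_integral_sub_sq hab c
    · obtain ⟨t, ⟨hat, htb⟩, hsplit⟩ := exists_split_integral_minSqDist_insert hs hc hab
      have hk : (0 : ℝ) < s.card := by exact_mod_cast hs.card_pos
      have hkn : (s.card : ℝ) + 1 ≤ n := by exact_mod_cast hcard
      calc (b - a) ^ 3 / (12 * n ^ 2) ≤ ((t - a) + (b - t)) ^ 3 / (12 * (s.card + 1) ^ 2) := by
            rw [sub_add_sub_cancel']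
            exact div_le_div_of_nonneg_left (pow_nonneg (sub_nonneg.2 hab) 3) (by positivity)
              (by gcongr)
        _ ≤ (t - a) ^ 3 / (12 * s.card ^ 2) + (b - t) ^ 3 / 12 :=
            add_pow_three_div_sq_le (sub_nonneg.2 hat) (sub_nonneg.2 htb) hk
        _ ≤ _ := (add_le_add (ih hs le_rfl hat) (div_twelve_le_integral_sub_sq htb c)).trans hsplit

theorem sub_le_integral_minSqDist_insert_of_card_le_two {s : Finset ℝ} {b c : ℝ}
    (hs : s.card ≤ 2) (hc : ∀ y ∈ s, y < c) (hb : 0 ≤ b) (hbc : b ≤ c) :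
    c ^ 3 / 75 - (c - b) ^ 3 / 3 ≤ ∫ x in 0..b, minSqDist (insert c s) x := by
  rcases s.eq_empty_or_nonempty with rfl | hne
  · simp only [insert_empty_eq, minSqDist_singleton, integral_sub_sq]
    nlinarith [pow_nonneg (hb.trans hbc) 3]
  · obtain ⟨t, ⟨ht0, htb⟩, hsplit⟩ := exists_split_integral_minSqDist_insert hne hc hb
    have hleft := div_le_integral_minSqDist hne hs ht0
    rw [integral_sub_sq] at hsplit
    norm_num at hleft
    -- the left-hand side is the minimum over `t` of the two-cell bound, attained at `t = 4c/5`
    nlinarith [mul_nonneg (sq_nonneg (5 * t - 4 * c)) (by linarith : (0:ℝ) ≤ 8 * c - 5 * t)]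

theorem sub_le_integral_minSqDist {γ : Finset ℝ} {b r : ℝ} (hr : r ∈ γ)
    (hcard : (γ.filter (· < r)).card ≤ 2) (hb : 0 ≤ b) (hbr : b ≤ r) :
    r ^ 3 / 75 - (r - b) ^ 3 / 3 ≤ ∫ x in 0..b, minSqDist γ x := by
  refine (sub_le_integral_minSqDist_insert_of_card_le_two hcard
    (fun y hy => (Finset.mem_filter.1 hy).2) hb hbr).trans
    (integral_minSqDist_mono (Finset.insert_nonempty _ _) ⟨r, hr⟩ hb fun y hy => ?_)
  by_cases hyr : y < r
  · exact ⟨y, Finset.mem_insert_of_mem (Finset.mem_filter.2 ⟨hy, hyr⟩), fun _ _ => le_rfl⟩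
  · exact ⟨r, Finset.mem_insert_self _ _, fun x hx =>
      sq_sub_le_sq_sub_of_two_mul_le (not_lt.1 hyr) (by linarith [hx.2, not_lt.1 hyr])⟩

theorem div_two_le_sum_min_sq {x y z p q d : ℝ} (hxy : d ≤ (x - y) ^ 2) (hyz : d ≤ (y - z) ^ 2)
    (hxz : d ≤ (x - z) ^ 2) :
    d / 2 ≤ min ((x - p) ^ 2) ((x - q) ^ 2) + min ((y - p) ^ 2) ((y - q) ^ 2) +
      min ((z - p) ^ 2) ((z - q) ^ 2) := by
  have pair : ∀ u v w : ℝ, (u - v) ^ 2 / 2 ≤ (u - w) ^ 2 + (v - w) ^ 2 := fun u v w => by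
    nlinarith [sq_nonneg (u + v - 2 * w)]
  -- two of the three points share their nearest center
  rcases le_total ((x - p) ^ 2) ((x - q) ^ 2) with hx | hx <;>
  rcases le_total ((y - p) ^ 2) ((y - q) ^ 2) with hy | hy <;>
  rcases le_total ((z - p) ^ 2) ((z - q) ^ 2) with hz | hz <;>
  simp only [min_eq_left, min_eq_right, hx, hy, hz] <;>
  linarith [pair x y p, pair x y q, pair y z p, pair y z q, pair x z p, pair x z q,
    sq_nonneg (x - p), sq_nonneg (x - q), sq_nonneg (y - p), sq_nonneg (y - q),
    sq_nonneg (z - p), sq_nonneg (z - q)]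

theorem one_div_72_le_sum_min_sq (p q : ℝ) :
    1 / 72 ≤ min ((2/3 - p) ^ 2) ((2/3 - q) ^ 2) + min ((5/6 - p) ^ 2) ((5/6 - q) ^ 2) +
      min ((1 - p) ^ 2) ((1 - q) ^ 2) := by
  have := div_two_le_sum_min_sq (p := p) (q := q) (d := 1/36) (x := 2/3) (y := 5/6) (z := 1)
    (by norm_num) (by norm_num) (by norm_num)
  linarith

theorem min_add_le_min_add_min {u a b : ℝ} (hu : 0 ≤ u) (ha : 0 ≤ a) (hb : 0 ≤ b) :
    min u (a + b) ≤ min u a + min u b := by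
  rcases le_total u a with h | h <;> rcases le_total u b with h' | h' <;>
  simp only [min_eq_left, min_eq_right, h, h'] <;>
  linarith [min_le_left u (a + b), min_le_right u (a + b)]

theorem one_div_72_le_atoms {γ : Finset ℝ} (hγ : γ.Nonempty) {p q : ℝ} (hp : p ≤ 2/3)
    (h : ∀ y ∈ γ, y ≤ p ∨ y = q) :
    1 / 72 ≤ minSqDist γ (2/3) + minSqDist γ (5/6) + minSqDist γ 1 := by
  have h' : ∀ y ∈ γ, y ≤ p ∨ y = q ∨ y = q := fun y hy => (h y hy).imp_right Or.inl
  have h₁ := min_le_minSqDist_of_forall_le_or_eq hγ hp h'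
  have h₂ := min_le_minSqDist_of_forall_le_or_eq hγ (by linarith : p ≤ 5/6) h'
  have h₃ := min_le_minSqDist_of_forall_le_or_eq hγ (by linarith : p ≤ 1) h'
  simp only [min_self] at h₁ h₂ h₃
  linarith [one_div_72_le_sum_min_sq p q]

theorem min_le_atoms {γ : Finset ℝ} (hγ : γ.Nonempty) {r p q : ℝ} (hr : r ≤ 2/3)
    (h : ∀ y ∈ γ, y ≤ r ∨ y = p ∨ y = q) :
    min ((2/3 - r) ^ 2) (1 / 72) ≤ minSqDist γ (2/3) + minSqDist γ (5/6) + minSqDist γ 1 := by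
  set u := (2/3 - r) ^ 2
  have hatom : ∀ a : ℝ, 2/3 ≤ a → min u (min ((a - p) ^ 2) ((a - q) ^ 2)) ≤ minSqDist γ a :=
    fun a ha => (min_le_min_right _ (pow_le_pow_left₀ (by linarith) (by linarith) 2)).trans
      (min_le_minSqDist_of_forall_le_or_eq hγ (by linarith) h)
  have hm : ∀ a : ℝ, 0 ≤ min ((a - p) ^ 2) ((a - q) ^ 2) :=
    fun a => le_min (sq_nonneg _) (sq_nonneg _)
  have hu : 0 ≤ u := sq_nonneg _
  linarith [min_le_min_left u (one_div_72_le_sum_min_sq p q),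
    min_add_le_min_add_min hu (add_nonneg (hm (2/3)) (hm (5/6))) (hm 1),
    min_add_le_min_add_min hu (hm (2/3)) (hm (5/6)), hatom (2/3) le_rfl,
    hatom (5/6) (by norm_num), hatom 1 (by norm_num)]

theorem one_div_384_le_of_mem_Icc {r : ℝ} (h₁ : 1/2 ≤ r) (h₂ : r ≤ 5/8) :
    1 / 384 ≤ r ^ 3 / 75 - (r - 1/2) ^ 3 / 3 + min ((2/3 - r) ^ 2) (1 / 72) / 6 := by
  have h := mul_nonneg (sub_nonneg.2 h₁) (sub_nonneg.2 h₂)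
  rcases min_cases ((2/3 - r) ^ 2) (1 / 72) with ⟨hmin, -⟩ | ⟨hmin, -⟩ <;> rw [hmin]
  · nlinarith [mul_nonneg h (sub_nonneg.2 h₁), mul_nonneg (sub_nonneg.2 h₂) (sq_nonneg (r - 1/2)),
      mul_nonneg (sub_nonneg.2 h₁) (sq_nonneg (r - 5/8))]
  · nlinarith [mul_nonneg h (sub_nonneg.2 h₁), mul_nonneg (sub_nonneg.2 h₁) (sq_nonneg (r - 1/2))]

theorem one_div_384_le_integral_minSqDist {γ : Finset ℝ} (hγ : γ.Nonempty)
    (hcard : (γ.filter (· < 5/8)).card ≤ 2) :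
    1 / 384 ≤ ∫ x in (0:ℝ)..1/2, minSqDist γ x := by
  have := sub_le_integral_minSqDist (Finset.mem_insert_self (5/8) γ)
    (by rwa [Finset.filter_insert, if_neg (lt_irrefl _)]) (b := 1/2) (by norm_num) (by norm_num)
  norm_num at this
  linarith [integral_minSqDist_insert_le hγ (5/8) (a := 0) (b := 1/2) (by norm_num)]

theorem one_div_384_le_distortion_of_forall_le_or_eq {γ : Finset ℝ} (hγ : γ.Nonempty)
    {r p q : ℝ} (hr : r ∈ γ) (hr₅ : r < 5/8) (hcard : (γ.filter (· < r)).card ≤ 2)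
    (hI : 1 / 2400 ≤ ∫ x in (0:ℝ)..1/2, minSqDist γ x) (h : ∀ y ∈ γ, y ≤ r ∨ y = p ∨ y = q) :
    1 / 384 ≤ (∫ x in (0:ℝ)..1/2, minSqDist γ x) +
      (minSqDist γ (2/3) + minSqDist γ (5/6) + minSqDist γ 1) / 6 := by
  have hS := min_le_atoms hγ (by linarith : r ≤ 2/3) h
  rcases le_or_gt r (1/2) with hr₂ | hr₂
  · rw [min_eq_right (by nlinarith)] at hS
    linarith
  · linarith [sub_le_integral_minSqDist hr hcard (by norm_num : (0:ℝ) ≤ 1/2) hr₂.le,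
      one_div_384_le_of_mem_Icc hr₂.le hr₅.le]

theorem one_div_384_le_distortion {γ : Finset ℝ} (hγ : γ.Nonempty) (hcard : γ.card ≤ 5) :
    1 / 384 ≤ (∫ x in (0:ℝ)..1/2, minSqDist γ x) +
      (minSqDist γ (2/3) + minSqDist γ (5/6) + minSqDist γ 1) / 6 := by
  have hI : 1 / 2400 ≤ ∫ x in (0:ℝ)..1/2, minSqDist γ x := by
    have := div_le_integral_minSqDist hγ hcard (a := 0) (b := 1/2) (by norm_num)
    norm_num at this
    linarith
  have hS : 0 ≤ minSqDist γ (2/3) + minSqDist γ (5/6) + minSqDist γ 1 := by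
    linarith [minSqDist_nonneg hγ (2/3), minSqDist_nonneg hγ (5/6), minSqDist_nonneg hγ 1]
  set U := γ.filter (· < 5/8)
  set V := γ.filter (¬ · < 5/8)
  have hUV : U.card + V.card = γ.card := Finset.card_filter_add_card_filter_not _
  rcases le_or_gt U.card 2 with hU | hU
  · linarith [one_div_384_le_integral_minSqDist hγ hU]
  have hUne : U.Nonempty := Finset.card_pos.1 (by omega)
  set r := U.max' hUne
  have hrU : r ∈ U := U.max'_mem hUne
  have hr : r < 5/8 := (Finset.mem_filter.1 hrU).2
  rcases le_or_gt V.card 1 with hV | hV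
  · obtain ⟨q, hq⟩ := Finset.card_le_one_iff_subset_singleton.1 hV
    have := one_div_72_le_atoms hγ (p := 5/8) (q := q) (by norm_num) fun y hy => by
      by_cases hy' : y < 5/8
      · exact Or.inl hy'.le
      · exact Or.inr (Finset.mem_singleton.1 (hq (Finset.mem_filter.2 ⟨hy, hy'⟩)))
    linarith
  obtain ⟨p, q, -, hVpq⟩ := Finset.card_eq_two.1 (by omega : V.card = 2)
  have hlt : γ.filter (· < r) ⊆ U.erase r := fun y hy => by
    obtain ⟨hy, hyr⟩ := Finset.mem_filter.1 hy
    exact Finset.mem_erase.2 ⟨hyr.ne, Finset.mem_filter.2 ⟨hy, hyr.trans hr⟩⟩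
  refine one_div_384_le_distortion_of_forall_le_or_eq hγ (p := p) (q := q)
    (Finset.mem_filter.1 hrU).1 hr
    ((Finset.card_le_card hlt).trans (by rw [Finset.card_erase_of_mem hrU]; omega)) hI
    fun y hy => ?_
  by_cases hy' : y < 5/8
  · exact Or.inl (U.le_max' y (Finset.mem_filter.2 ⟨hy, hy'⟩))
  · have : y ∈ V := Finset.mem_filter.2 ⟨hy, hy'⟩
    rw [hVpq, Finset.mem_insert, Finset.mem_singleton] at this
    exact Or.inr this

theorem mix_unif_discD_eq : mix (unif 0 (1/2)) discD = volume.restrict (Icc 0 (1/2)) +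
    (6 : ℝ≥0∞)⁻¹ • (Measure.dirac (2/3) + Measure.dirac (5/6) + Measure.dirac 1) := by
  have h2 : ENNReal.ofReal (1/2 - 0 : ℝ) = 2⁻¹ := by
    rw [show (1/2 - 0 : ℝ) = 2⁻¹ by norm_num, ENNReal.ofReal_inv_of_pos (by norm_num)]
    norm_num
  have h6 : (2 : ℝ≥0∞)⁻¹ * 3⁻¹ = 6⁻¹ := by
    rw [← ENNReal.mul_inv (by norm_num) (by norm_num)]
    norm_num
  rw [mix, unif, discD, smul_smul, smul_smul, h2, inv_inv,
    ENNReal.inv_mul_cancel (by norm_num) (by norm_num), h6, one_smul]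

theorem distortion_mix_unif_discD {γ : Finset ℝ} (hγ : γ.Nonempty) :
    distortion (mix (unif 0 (1/2)) discD) γ = (∫ x in (0:ℝ)..1/2, minSqDist γ x) +
      (minSqDist γ (2/3) + minSqDist γ (5/6) + minSqDist γ 1) / 6 := by
  have hd : ∀ a : ℝ, Integrable (minSqDist γ) (Measure.dirac a) :=
    fun _ => integrable_dirac enorm_lt_top
  change ∫ x, minSqDist γ x ∂_ = _
  rw [mix_unif_discD_eq,
    integral_add_measure (continuous_minSqDist hγ).integrableOn_Icc
      ((((hd _).add_measure (hd _)).add_measure (hd _)).smul_measure (by norm_num)),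
    integral_smul_measure, integral_add_measure ((hd _).add_measure (hd _)) (hd _),
    integral_add_measure (hd _) (hd _), integral_dirac, integral_dirac, integral_dirac,
    intervalIntegral.integral_of_le (by norm_num), ← integral_Icc_eq_integral_Ioc,
    ENNReal.toReal_inv, smul_eq_mul]
  norm_num
  ring

theorem distortion_mix_unif_discD_optimal :
    distortion (mix (unif 0 (1/2)) discD) {1/8, 3/8, 2/3, 5/6, 1} = 1 / 384 := by
  set γ : Finset ℝ := {1/8, 3/8, 2/3, 5/6, 1}
  have hne : γ.Nonempty := Finset.insert_nonempty _ _
  have hatom : ∀ a ∈ γ, minSqDist γ a = 0 := fun a ha =>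
    le_antisymm (by simpa using minSqDist_le_sq ha a) (minSqDist_nonneg hne a)
  have hcell : ∀ c ∈ γ, ∀ l u : ℝ, l ≤ u → (∀ x ∈ Icc l u, ∀ y ∈ γ, (x - c) ^ 2 ≤ (x - y) ^ 2) →
      ∫ x in l..u, minSqDist γ x = ((u - c) ^ 3 - (l - c) ^ 3) / 3 := fun c hc l u hlu h => by
    rw [← integral_sub_sq]
    refine intervalIntegral.integral_congr fun x hx => minSqDist_eq_sq_of_forall hc (h x ?_)
    rwa [uIcc_of_le hlu] at hx
  rw [distortion_mix_unif_discD hne, hatom (2/3) (by simp [γ]), hatom (5/6) (by simp [γ]),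
    hatom 1 (by simp [γ]), ← intervalIntegral.integral_add_adjacent_intervals
      (intervalIntegrable_minSqDist hne 0 (1/4)) (intervalIntegrable_minSqDist hne (1/4) (1/2)),
    hcell (1/8) (by simp [γ]) 0 (1/4) (by norm_num) (by
      simp only [γ, Finset.mem_insert, Finset.mem_singleton]
      rintro x ⟨hx₀, hx₁⟩ y (rfl | rfl | rfl | rfl | rfl) <;> nlinarith),
    hcell (3/8) (by simp [γ]) (1/4) (1/2) (by norm_num) (by
      simp only [γ, Finset.mem_insert, Finset.mem_singleton]
      rintro x ⟨hx₀, hx₁⟩ y (rfl | rfl | rfl | rfl | rfl) <;> nlinarith)]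
  norm_num

theorem stmt4 (P : Measure ℝ) (hP : P = mix (unif 0 (1/2)) discD) :
    IsOptimalSet P 5 ({1/8, 3/8, 2/3, 5/6, 1} : Finset ℝ) ∧ quantErr P 5 = 1/384 := by
  subst hP
  have hne : ({1/8, 3/8, 2/3, 5/6, 1} : Finset ℝ).Nonempty := Finset.insert_nonempty _ _
  have hcard : ({1/8, 3/8, 2/3, 5/6, 1} : Finset ℝ).card ≤ 5 := by norm_num
  have hleast : IsLeast {v : ℝ | ∃ γ : Finset ℝ, γ.Nonempty ∧ γ.card ≤ 5 ∧
      v = distortion (mix (unif 0 (1/2)) discD) γ} (1/384) := by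
    refine ⟨⟨_, hne, hcard, distortion_mix_unif_discD_optimal.symm⟩, ?_⟩
    rintro v ⟨γ, hγ, hγcard, rfl⟩
    rw [distortion_mix_unif_discD hγ]
    exact one_div_384_le_distortion hγ hγcard
  have hq : quantErr (mix (unif 0 (1/2)) discD) 5 = 1/384 := hleast.csInf_eq
  exact ⟨⟨hne, hcard, distortion_mix_unif_discD_optimal.trans hq.symm⟩, hq⟩
end

section
/- Let P = (1/2)P₁ + (1/2)P₂ where P₁ is uniform on [0,1] and P₂ = δ_{1/2} is the Dirac measure at 1/2. Then P has two different optimal sets of two-means: {(3√5 − 5)/4, (1 + √5)/4} and {(3 − √5)/4, 3(3 − √5)/4}, both yielding the same quantization error V₂(P). In particular, optimal sets of n-means for mixed distributions need not be unique. -/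
open MeasureTheory Set Filter Real
open scoped ENNReal

/-!
For `0 ≤ a ≤ b ≤ 1` the uniform part contributes the explicit cubic
`(a³ + (b - a)³/4 + (1 - b)³)/6` to the distortion of `{a, b}`, and the atom contributes half the
squared distance from `1/2` to the nearer point. Projecting both points onto `[0, 1]` can only
lower the distortion, so it suffices to bound the resulting polynomial (one for each choice of
the point nearer to `1/2`) on the triangle `0 ≤ a ≤ b ≤ 1`; the minimum `(34 - 15√5)/24`
is attained at `{(3√5 - 5)/4, (1 + √5)/4}` and, by the symmetry `x ↦ 1 - x` of `P`, at its mirror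
image `{(3 - √5)/4, 3(3 - √5)/4}`.
-/

local notation "P₀" => mix (unif 0 1) (Measure.dirac (1 / 2))

lemma iInf_finset_pair {α β : Type*} [DecidableEq α] [ConditionallyCompleteLinearOrder β]
    (f : α → β) (a b : α) : ⨅ c : ({a, b} : Finset α), f c = min (f a) (f b) := by
  have : range (fun c : ({a, b} : Finset α) => f c) = {f a, f b} := by
    ext y
    simp [eq_comm]
  rw [iInf, this, csInf_pair]

lemma Finset.exists_eq_pair_of_card_le_two {α : Type*} [LinearOrder α]
    {γ : Finset α} (hne : γ.Nonempty) (hcard : γ.card ≤ 2) : ∃ a b, a ≤ b ∧ γ = {a, b} := by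
  obtain ⟨a, b, hab, rfl⟩ : ∃ a b, γ = {a, b} := by
    rcases (Nat.succ_le_of_lt hne.card_pos).eq_or_lt with h | h
    · obtain ⟨a, rfl⟩ := card_eq_one.mp h.symm
      exact ⟨a, a, (pair_eq_singleton a).symm⟩
    · obtain ⟨a, b, -, rfl⟩ := card_eq_two.mp (show γ.card = 2 by lia)
      exact ⟨a, b, rfl⟩
  rcases le_total a b with h | h
  · exact ⟨a, b, h, rfl⟩
  · exact ⟨b, a, h, pair_comm a b⟩

lemma isOptimalSet_of_forall_le {P : Measure ℝ} {n : ℕ} {γ : Finset ℝ} (hne : γ.Nonempty)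
    (hcard : γ.card ≤ n)
    (hle : ∀ δ : Finset ℝ, δ.Nonempty → δ.card ≤ n → distortion P γ ≤ distortion P δ) :
    IsOptimalSet P n γ := by
  refine ⟨hne, hcard, (IsLeast.csInf_eq (s := {v | ∃ δ : Finset ℝ, δ.Nonempty ∧ δ.card ≤ n ∧
    v = distortion P δ}) ⟨⟨γ, hne, hcard, rfl⟩, ?_⟩).symm⟩
  rintro _ ⟨δ, hδ, hδn, rfl⟩
  exact hle δ hδ hδn

lemma integral_mix_s8 {P₁ P₂ : Measure ℝ} {f : ℝ → ℝ} (h₁ : Integrable f P₁)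
    (h₂ : Integrable f P₂) :
    ∫ x, f x ∂(mix P₁ P₂) = (∫ x, f x ∂P₁ + ∫ x, f x ∂P₂) / 2 := by
  rw [mix, integral_add_measure (h₁.smul_measure (by simp)) (h₂.smul_measure (by simp)),
    integral_smul_measure, integral_smul_measure]
  norm_num
  ring

lemma unif_zero_one : unif 0 1 = volume.restrict (Icc 0 1) := by
  simp [unif]

lemma distortion_pair_s8 (P : Measure ℝ) (a b : ℝ) :
    distortion P {a, b} = ∫ x, min ((x - a) ^ 2) ((x - b) ^ 2) ∂P := by
  unfold distortion
  congr with x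
  exact iInf_finset_pair (fun c => (x - c) ^ 2) a b

lemma continuous_min_sq_sub (a b : ℝ) :
    Continuous fun x : ℝ => min ((x - a) ^ 2) ((x - b) ^ 2) := by
  fun_prop

lemma integral_Icc_min_sq_sub {l a b r : ℝ} (hla : l ≤ a) (hab : a ≤ b) (hbr : b ≤ r) :
    ∫ x in Icc l r, min ((x - a) ^ 2) ((x - b) ^ 2)
      = ((a - l) ^ 3 + (b - a) ^ 3 / 4 + (r - b) ^ 3) / 3 := by
  set m := (a + b) / 2 with hm
  have hlm : l ≤ m := by linarith
  have hmr : m ≤ r := by linarith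
  have hleft : ∫ x in l..m, min ((x - a) ^ 2) ((x - b) ^ 2) = ∫ x in l..m, (x - a) ^ 2 := by
    refine intervalIntegral.integral_congr fun x hx => min_eq_left ?_
    rw [uIcc_of_le hlm] at hx
    nlinarith [mul_nonneg (sub_nonneg.2 hab) (sub_nonneg.2 hx.2)]
  have hright : ∫ x in m..r, min ((x - a) ^ 2) ((x - b) ^ 2) = ∫ x in m..r, (x - b) ^ 2 := by
    refine intervalIntegral.integral_congr fun x hx => min_eq_right ?_
    rw [uIcc_of_le hmr] at hx
    nlinarith [mul_nonneg (sub_nonneg.2 hab) (sub_nonneg.2 hx.1)]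
  have hc := continuous_min_sq_sub a b
  rw [integral_Icc_eq_integral_Ioc, ← intervalIntegral.integral_of_le (hlm.trans hmr),
    ← intervalIntegral.integral_add_adjacent_intervals (hc.intervalIntegrable l m)
      (hc.intervalIntegrable m r), hleft, hright,
    intervalIntegral.integral_comp_sub_right (· ^ 2),
    intervalIntegral.integral_comp_sub_right (· ^ 2), integral_pow, integral_pow]
  ring

lemma sq_sub_projIcc_le {l r x : ℝ} (h : l ≤ r) (hx : x ∈ Icc l r) (c : ℝ) :
    (x - projIcc l r h c) ^ 2 ≤ (x - c) ^ 2 := by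
  have := abs_projIcc_sub_projIcc h (c := x) (d := c)
  rw [projIcc_of_mem h hx] at this
  exact sq_le_sq.mpr this

lemma distortion_mix_pair (a b : ℝ) :
    distortion P₀ {a, b} = (∫ x in Icc 0 1, min ((x - a) ^ 2) ((x - b) ^ 2)) / 2
      + min ((1 / 2 - a) ^ 2) ((1 / 2 - b) ^ 2) / 2 := by
  have hc := continuous_min_sq_sub a b
  rw [distortion_pair_s8, integral_mix_s8 (unif_zero_one ▸ hc.integrableOn_Icc)
    (integrable_dirac enorm_lt_top), unif_zero_one, integral_dirac]
  ring

lemma distortion_mix_pair_of_le {a b : ℝ} (ha : 0 ≤ a) (hab : a ≤ b) (hb : b ≤ 1) :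
    distortion P₀ {a, b} = (a ^ 3 + (b - a) ^ 3 / 4 + (1 - b) ^ 3) / 6
      + min ((1 / 2 - a) ^ 2) ((1 / 2 - b) ^ 2) / 2 := by
  rw [distortion_mix_pair, integral_Icc_min_sq_sub ha hab hb]
  ring

lemma distortion_mix_projIcc_le (a b : ℝ) :
    distortion P₀ {(projIcc 0 1 zero_le_one a : ℝ), (projIcc 0 1 zero_le_one b : ℝ)}
      ≤ distortion P₀ {a, b} := by
  have hle : ∀ x ∈ Icc (0 : ℝ) 1, min ((x - projIcc 0 1 zero_le_one a) ^ 2)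
      ((x - projIcc 0 1 zero_le_one b) ^ 2) ≤ min ((x - a) ^ 2) ((x - b) ^ 2) := fun x hx =>
    min_le_min (sq_sub_projIcc_le _ hx a) (sq_sub_projIcc_le _ hx b)
  rw [distortion_mix_pair, distortion_mix_pair]
  gcongr ?_ / 2 + ?_ / 2
  · exact setIntegral_mono_on (continuous_min_sq_sub _ _).integrableOn_Icc
      (continuous_min_sq_sub _ _).integrableOn_Icc measurableSet_Icc hle
  · exact hle _ ⟨by norm_num, by norm_num⟩

lemma two_lt_sqrt_five : 2 < √5 := by
  rw [Real.lt_sqrt zero_le_two]; norm_num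

lemma sqrt_five_lt : √5 < 9 / 4 := by
  rw [Real.sqrt_lt' (by norm_num)]; norm_num

-- The hints are built around the minimiser `a = (3√5 - 5)/4`, `b = (1 + √5)/4`.
lemma two_means_bound_left {a b : ℝ} (ha : 0 ≤ a) (hab : a ≤ b) (hb : b ≤ 1) :
    (34 - 15 * √5) / 24 ≤ (a ^ 3 + (b - a) ^ 3 / 4 + (1 - b) ^ 3) / 6 + (1 / 2 - a) ^ 2 / 2 := by
  have h5 : √5 ^ 2 = 5 := Real.sq_sqrt (by norm_num)
  have := two_lt_sqrt_five
  have := sqrt_five_lt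
  nlinarith [mul_nonneg ha (sq_nonneg (a - (3 * √5 - 5) / 4)),
    mul_nonneg (sub_nonneg.2 hb) (sq_nonneg (b - (1 + √5) / 4)),
    mul_nonneg (sub_nonneg.2 hab) (sq_nonneg (b - a - (3 - √5) / 2)),
    sq_nonneg (a - (3 * √5 - 5) / 4), sq_nonneg (b - (1 + √5) / 4),
    sq_nonneg (a - (3 * √5 - 5) / 4 - (b - (1 + √5) / 4)),
    sq_nonneg (a - (3 * √5 - 5) / 4 + (b - (1 + √5) / 4))]

lemma two_means_bound_right {a b : ℝ} (ha : 0 ≤ a) (hab : a ≤ b) (hb : b ≤ 1) :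
    (34 - 15 * √5) / 24 ≤ (a ^ 3 + (b - a) ^ 3 / 4 + (1 - b) ^ 3) / 6 + (1 / 2 - b) ^ 2 / 2 := by
  have := two_means_bound_left (a := 1 - b) (b := 1 - a) (by linarith) (by linarith) (by linarith)
  linarith

lemma le_distortion_mix_pair {a b : ℝ} (hab : a ≤ b) :
    (34 - 15 * √5) / 24 ≤ distortion P₀ {a, b} := by
  refine le_trans ?_ (distortion_mix_projIcc_le a b)
  set a' : ℝ := ↑(projIcc 0 1 zero_le_one a)
  set b' : ℝ := ↑(projIcc 0 1 zero_le_one b)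
  have ha' : 0 ≤ a' := (projIcc 0 1 zero_le_one a).2.1
  have hb' : b' ≤ 1 := (projIcc 0 1 zero_le_one b).2.2
  have hab' : a' ≤ b' := monotone_projIcc zero_le_one hab
  rw [distortion_mix_pair_of_le ha' hab' hb']
  rcases min_cases ((1 / 2 - a') ^ 2) ((1 / 2 - b') ^ 2) with ⟨h, -⟩ | ⟨h, -⟩ <;> rw [h]
  · exact two_means_bound_left ha' hab' hb'
  · exact two_means_bound_right ha' hab' hb'

lemma distortion_mix_first :
    distortion P₀ {(3 * √5 - 5) / 4, (1 + √5) / 4} = (34 - 15 * √5) / 24 := by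
  have h5 : √5 ^ 2 = 5 := Real.sq_sqrt (by norm_num)
  have := two_lt_sqrt_five
  have := sqrt_five_lt
  rw [distortion_mix_pair_of_le (by linarith) (by linarith) (by linarith),
    min_eq_left (by nlinarith)]
  linear_combination (√5 / 16) * h5

lemma distortion_mix_second :
    distortion P₀ {(3 - √5) / 4, 3 * (3 - √5) / 4} = (34 - 15 * √5) / 24 := by
  have h5 : √5 ^ 2 = 5 := Real.sq_sqrt (by norm_num)
  have := two_lt_sqrt_five
  have := sqrt_five_lt
  rw [distortion_mix_pair_of_le (by linarith) (by linarith) (by linarith),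
    min_eq_right (by nlinarith)]
  linear_combination (√5 / 16) * h5

theorem stmt8 (P : Measure ℝ) (hP : P = mix (unif 0 1) (Measure.dirac (1/2))) :
    IsOptimalSet P 2 ({(3 * Real.sqrt 5 - 5) / 4, (1 + Real.sqrt 5) / 4} : Finset ℝ) ∧
    IsOptimalSet P 2
      ({(3 - Real.sqrt 5) / 4, 3 * (3 - Real.sqrt 5) / 4} : Finset ℝ) ∧
    ({(3 * Real.sqrt 5 - 5) / 4, (1 + Real.sqrt 5) / 4} : Finset ℝ) ≠
      ({(3 - Real.sqrt 5) / 4, 3 * (3 - Real.sqrt 5) / 4} : Finset ℝ) := by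
  subst hP
  have hbound (δ : Finset ℝ) (hne : δ.Nonempty) (hcard : δ.card ≤ 2) :
      (34 - 15 * √5) / 24 ≤ distortion P₀ δ := by
    obtain ⟨a, b, hab, rfl⟩ := Finset.exists_eq_pair_of_card_le_two hne hcard
    exact le_distortion_mix_pair hab
  refine ⟨isOptimalSet_of_forall_le (Finset.insert_nonempty _ _) Finset.card_le_two
      (distortion_mix_first ▸ hbound),
    isOptimalSet_of_forall_le (Finset.insert_nonempty _ _) Finset.card_le_two
      (distortion_mix_second ▸ hbound), fun h => ?_⟩
  have hmem : (1 + √5) / 4 ∈ ({(3 - √5) / 4, 3 * (3 - √5) / 4} : Finset ℝ) :=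
    h ▸ Finset.mem_insert_of_mem (Finset.mem_singleton_self _)
  have := two_lt_sqrt_five
  have := sqrt_five_lt
  simp only [Finset.mem_insert, Finset.mem_singleton] at hmem
  rcases hmem with h | h <;> linarith
end

section
/- Let P₁ be the self-similar (Cantor) measure on ℝ satisfying P₁ = (1/2)P₁∘S₁⁻¹ + (1/2)P₁∘S₂⁻¹, where S₁(x) = x/3 and S₂(x) = x/3 + 1/3. Then the expectation of P₁ is 1/4, the variance of P₁ is 1/32, and for every x₀ ∈ ℝ, ∫(x − x₀)² dP₁(x) = 1/32 + (x₀ − 1/4)². -/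
/-!
Both maps `x ↦ x/3` and `x ↦ x/3 + 1/3` bring points three times closer to `[0, 1/2]`, so
self-similarity gives `P₁ {dist > t} ≤ P₁ {dist > 3t}`; iterating, `P₁` is concentrated on
`[0, 1/2]` and all its moments are finite. Integrating `x` and `x²` against the self-similarity
relation then gives `m = m/3 + 1/6` and `s = s/9 + m/9 + 1/18`, i.e. `m = 1/4` and `s = 3/32`.
-/

open MeasureTheory Set Filter Real
open scoped ENNReal

section SelfSimilar

variable {α : Type*} [MeasurableSpace α] {μ : Measure α} {f g : α → α}

theorem measure_eq_of_eq_half_map_add (hμ : μ = (2 : ℝ≥0∞)⁻¹ • μ.map f + (2 : ℝ≥0∞)⁻¹ • μ.map g)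
    (hf : Measurable f) (hg : Measurable g) {s : Set α} (hs : MeasurableSet s) :
    μ s = 2⁻¹ * μ (f ⁻¹' s) + 2⁻¹ * μ (g ⁻¹' s) := by
  conv_lhs => rw [hμ]
  simp only [Measure.add_apply, Measure.smul_apply, Measure.map_apply hf hs,
    Measure.map_apply hg hs, smul_eq_mul]

theorem integral_eq_of_eq_half_map_add
    (hμ : μ = (2 : ℝ≥0∞)⁻¹ • μ.map f + (2 : ℝ≥0∞)⁻¹ • μ.map g)
    (hf : Measurable f) (hg : Measurable g) {φ : α → ℝ} (hφ : Measurable φ)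
    (hφf : Integrable (φ ∘ f) μ) (hφg : Integrable (φ ∘ g) μ) :
    ∫ x, φ x ∂μ = 2⁻¹ * ∫ x, φ (f x) ∂μ + 2⁻¹ * ∫ x, φ (g x) ∂μ := by
  have hφ' := hφ.stronglyMeasurable.aestronglyMeasurable (μ := μ.map f)
  have hφ'' := hφ.stronglyMeasurable.aestronglyMeasurable (μ := μ.map g)
  have hif : Integrable φ (μ.map f) := (integrable_map_measure hφ' hf.aemeasurable).2 hφf
  have hig : Integrable φ (μ.map g) := (integrable_map_measure hφ'' hg.aemeasurable).2 hφg
  conv_lhs => rw [hμ]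
  rw [integral_add_measure (hif.smul_measure (by simp)) (hig.smul_measure (by simp)),
    integral_smul_measure, integral_smul_measure, integral_map hf.aemeasurable hφ',
    integral_map hg.aemeasurable hφ'']
  simp [ENNReal.toReal_inv]

theorem ae_le_zero_of_measure_lt_le_measure_mul_lt [IsFiniteMeasure μ] {d : α → ℝ}
    (hd : Measurable d) {c : ℝ} (hc : 1 < c)
    (h : ∀ t > 0, μ {x | t < d x} ≤ μ {x | c * t < d x}) :
    ∀ᵐ x ∂μ, d x ≤ 0 := by
  have hnull : ∀ t > 0, μ {x | t < d x} = 0 := by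
    intro t ht
    set s : ℕ → Set α := fun n => {x | c ^ n * t < d x}
    have hle : ∀ n, μ {x | t < d x} ≤ μ (s n) := by
      intro n
      induction n with
      | zero => simp [s]
      | succ n ih =>
        refine ih.trans ?_
        simpa only [s, pow_succ', mul_assoc] using h _ (by positivity)
    have hanti : Antitone s := fun n m hnm x hx =>
      lt_of_le_of_lt (mul_le_mul_of_nonneg_right (pow_le_pow_right₀ hc.le hnm) ht.le) hx
    have hempty : ⋂ n, s n = ∅ := by
      refine eq_empty_of_forall_notMem fun x hx => ?_
      obtain ⟨n, hn⟩ := ((tendsto_pow_atTop_atTop_of_one_lt hc).atTop_mul_const ht).eventually_gt_atTop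
        (d x) |>.exists
      exact (mem_iInter.1 hx n).not_gt hn
    have hinf := hanti.measure_iInter (fun n => (measurableSet_lt measurable_const hd).nullMeasurableSet)
      ⟨0, measure_ne_top μ _⟩
    rw [hempty, measure_empty] at hinf
    exact le_antisymm (hinf ▸ le_iInf hle) bot_le
  have hsmall : ∀ n : ℕ, ∀ᵐ x ∂μ, d x ≤ 1 / (n + 1) := fun n => by
    rw [ae_iff]
    simpa only [not_le] using hnull _ (by positivity)
  filter_upwards [ae_all_iff.2 hsmall] with x hx
  exact ge_of_tendsto' tendsto_one_div_add_atTop_nhds_zero_nat hx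

theorem ae_le_zero_of_eq_half_map_add [IsFiniteMeasure μ]
    (hμ : μ = (2 : ℝ≥0∞)⁻¹ • μ.map f + (2 : ℝ≥0∞)⁻¹ • μ.map g)
    (hf : Measurable f) (hg : Measurable g) {d : α → ℝ} (hd : Measurable d) {c : ℝ} (hc : 1 < c)
    (hdf : ∀ x, c * d (f x) ≤ d x) (hdg : ∀ x, c * d (g x) ≤ d x) :
    ∀ᵐ x ∂μ, d x ≤ 0 := by
  refine ae_le_zero_of_measure_lt_le_measure_mul_lt hd hc fun t ht => ?_
  have hpre : ∀ k : α → α, (∀ x, c * d (k x) ≤ d x) →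
      k ⁻¹' {x | t < d x} ⊆ {x | c * t < d x} := fun k hk x hx =>
    (mul_lt_mul_of_pos_left hx (by linarith)).trans_le (hk x)
  rw [measure_eq_of_eq_half_map_add hμ hf hg (measurableSet_lt measurable_const hd)]
  calc 2⁻¹ * μ (f ⁻¹' {x | t < d x}) + 2⁻¹ * μ (g ⁻¹' {x | t < d x})
      ≤ 2⁻¹ * μ {x | c * t < d x} + 2⁻¹ * μ {x | c * t < d x} := by
        gcongr
        exacts [hpre f hdf, hpre g hdg]
    _ = μ {x | c * t < d x} := by rw [← add_mul, ENNReal.inv_two_add_inv_two, one_mul]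

end SelfSimilar

theorem integral_sub_sq_eq {μ : Measure ℝ} [IsProbabilityMeasure μ]
    (h₁ : Integrable (fun x => x) μ) (h₂ : Integrable (fun x => x ^ 2) μ) (x₀ : ℝ) :
    ∫ x, (x - x₀) ^ 2 ∂μ = (∫ x, x ^ 2 ∂μ) - (∫ x, x ∂μ) ^ 2 + (x₀ - ∫ x, x ∂μ) ^ 2 := by
  have hexpand : (fun x : ℝ => (x - x₀) ^ 2) = fun x => x ^ 2 + (-(2 * x₀) * x + x₀ ^ 2) := by
    funext x; ring
  have hlin : Integrable (fun x : ℝ => -(2 * x₀) * x + x₀ ^ 2) μ :=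
    (h₁.const_mul _).add (integrable_const _)
  rw [hexpand, integral_add h₂ hlin,
    integral_add (h₁.const_mul _) (integrable_const _), integral_const_mul, integral_const]
  simp only [probReal_univ, smul_eq_mul, one_mul]
  ring

section Cantor

variable {P₁ : Measure ℝ} [IsProbabilityMeasure P₁]

theorem cantor_ae_mem_Icc (hP₁ : P₁ = (2 : ℝ≥0∞)⁻¹ • P₁.map (fun x => x / 3) +
      (2 : ℝ≥0∞)⁻¹ • P₁.map (fun x => x / 3 + 1/3)) :
    ∀ᵐ x ∂P₁, x ∈ Icc (0 : ℝ) (1/2) := by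
  -- `max (-x) (x - 1/2)` is the distance to `[0, 1/2]` off that interval, and negative on it.
  have h := ae_le_zero_of_eq_half_map_add hP₁ (by fun_prop) (by fun_prop)
    (d := fun x => max (-x) (x - 1/2)) (by fun_prop) (c := 3) (by norm_num)
    (fun x => by simp only [mul_max_of_nonneg _ _ (by norm_num : (0 : ℝ) ≤ 3)]; gcongr <;> linarith)
    (fun x => by simp only [mul_max_of_nonneg _ _ (by norm_num : (0 : ℝ) ≤ 3)]; gcongr <;> linarith)
  filter_upwards [h] with x hx
  simp only [max_le_iff] at hx
  constructor <;> linarith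

theorem cantor_integrable (hP₁ : P₁ = (2 : ℝ≥0∞)⁻¹ • P₁.map (fun x => x / 3) +
      (2 : ℝ≥0∞)⁻¹ • P₁.map (fun x => x / 3 + 1/3)) {φ : ℝ → ℝ} (hφ : Continuous φ) :
    Integrable φ P₁ := by
  rw [← Measure.restrict_eq_self_of_ae_mem (cantor_ae_mem_Icc hP₁)]
  exact hφ.continuousOn.integrableOn_Icc

theorem cantor_integral_id (hP₁ : P₁ = (2 : ℝ≥0∞)⁻¹ • P₁.map (fun x => x / 3) +
      (2 : ℝ≥0∞)⁻¹ • P₁.map (fun x => x / 3 + 1/3)) :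
    ∫ x, x ∂P₁ = 1/4 := by
  have hx : Integrable (fun x : ℝ => x) P₁ := cantor_integrable hP₁ continuous_id
  have h := integral_eq_of_eq_half_map_add hP₁ (by fun_prop) (by fun_prop)
    (φ := fun x => x) (by fun_prop) (cantor_integrable hP₁ (by fun_prop))
    (cantor_integrable hP₁ (by fun_prop))
  simp only [integral_add (hx.div_const 3) (integrable_const _), integral_div,
    integral_const, probReal_univ, smul_eq_mul, one_mul] at h
  linarith

theorem cantor_integral_sq (hP₁ : P₁ = (2 : ℝ≥0∞)⁻¹ • P₁.map (fun x => x / 3) +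
      (2 : ℝ≥0∞)⁻¹ • P₁.map (fun x => x / 3 + 1/3)) :
    ∫ x, x ^ 2 ∂P₁ = 3/32 := by
  have hx : Integrable (fun x : ℝ => x) P₁ := cantor_integrable hP₁ continuous_id
  have hx2 : Integrable (fun x : ℝ => x ^ 2) P₁ := cantor_integrable hP₁ (continuous_pow 2)
  have h := integral_eq_of_eq_half_map_add hP₁ (by fun_prop) (by fun_prop)
    (φ := fun x => x ^ 2) (by fun_prop) (cantor_integrable hP₁ (by fun_prop))
    (cantor_integrable hP₁ (by fun_prop))
  have hf : (fun x : ℝ => (x / 3) ^ 2) = fun x => x ^ 2 / 9 := by funext x; ring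
  have hg : (fun x : ℝ => (x / 3 + 1/3) ^ 2) = fun x => x ^ 2 / 9 + (2/9 * x + 1/9) := by
    funext x; ring
  have hlin : Integrable (fun x : ℝ => 2/9 * x + 1/9) P₁ :=
    (hx.const_mul _).add (integrable_const _)
  rw [hf, hg, integral_add (hx2.div_const 9) hlin, integral_add (hx.const_mul _) (integrable_const _),
    integral_div, integral_const_mul, integral_const, cantor_integral_id hP₁] at h
  simp only [probReal_univ, smul_eq_mul, one_mul] at h
  linarith

end Cantor

theorem stmt9 (P₁ : Measure ℝ) [IsProbabilityMeasure P₁]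
    (hP₁ : P₁ = (2 : ℝ≥0∞)⁻¹ • P₁.map (fun x => x / 3) +
      (2 : ℝ≥0∞)⁻¹ • P₁.map (fun x => x / 3 + 1/3)) :
    (∫ x, x ∂P₁) = 1/4 ∧ (∫ x, x ^ 2 ∂P₁) - (∫ x, x ∂P₁) ^ 2 = 1/32 ∧
    ∀ x₀ : ℝ, (∫ x, (x - x₀) ^ 2 ∂P₁) = 1/32 + (x₀ - 1/4) ^ 2 := by
  have hmean := cantor_integral_id hP₁
  have hvar : (∫ x, x ^ 2 ∂P₁) - (∫ x, x ∂P₁) ^ 2 = 1/32 := by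
    rw [cantor_integral_sq hP₁, hmean]; norm_num
  refine ⟨hmean, hvar, fun x₀ => ?_⟩
  rw [integral_sub_sq_eq (cantor_integrable hP₁ continuous_id)
    (cantor_integrable hP₁ (continuous_pow 2)), hvar, hmean]
end
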